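/- arXiv:2312.04584 — 3 statements merged into one kernel-verified Lean document; each statement's English description precedes it below -/
import Mathlib

section
/- Let E be a real inner product space, let γ > 0, and define the RBF kernel K(x,y) = exp(-γ‖x-y‖²). For any test sample x_t ∈ E, any base sample z ∈ E, a sample-agnostic trigger t ∈ E and a sample-specific trigger s ∈ E, the kernel values at the poisoned test input x_t + t satisfy K(x_t + t, z + t) − K(x_t + t, z + s) ≥ K(x_t, z) · (1 − exp(−2γ⟨t − s, x_t − z⟩)). -/
/-- **Pointwise kernel comparison for poisoned samples.**
Let `E` be a real inner product space, `γ > 0`, and `K x y = exp (-γ‖x-y‖²)` the RBF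
kernel. For a test sample `xt`, a base sample `z`, a sample-agnostic trigger `t` and a
sample-specific trigger `s`, the kernel values at the poisoned test input `xt + t`
satisfy `K (xt+t) (z+t) - K (xt+t) (z+s) ≥ K xt z * (1 - exp (-2γ⟨t-s, xt-z⟩))`. -/
theorem rbf_kernel_poisoned_pointwise_bound
    {E : Type*} [NormedAddCommGroup E] [InnerProductSpace ℝ E]
    (γ : ℝ) (hγ : 0 < γ)
    (K : E → E → ℝ) (hK : ∀ x y : E, K x y = Real.exp (-γ * ‖x - y‖ ^ 2))
    (xt z t s : E) :
    K (xt + t) (z + t) - K (xt + t) (z + s) ≥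
      K xt z * (1 - Real.exp (-2 * γ * (inner ℝ (t - s) (xt - z) : ℝ))) := by
  have h1 : xt + t - (z + t) = xt - z := by abel
  have h2 : xt + t - (z + s) = (xt - z) + (t - s) := by abel
  rw [hK, hK, hK, h1, h2]
  set c : ℝ := (inner ℝ (t - s) (xt - z) : ℝ) with hc
  have hn : ‖(xt - z) + (t - s)‖ ^ 2 = ‖xt - z‖ ^ 2 + 2 * c + ‖t - s‖ ^ 2 := by
    rw [hc, real_inner_comm]
    exact norm_add_sq_real _ _
  rw [hn]
  have key : Real.exp (-γ * (‖xt - z‖ ^ 2 + 2 * c + ‖t - s‖ ^ 2))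
      ≤ Real.exp (-γ * ‖xt - z‖ ^ 2) * Real.exp (-2 * γ * c) := by
    rw [← Real.exp_add]
    apply Real.exp_le_exp.mpr
    nlinarith [sq_nonneg ‖t - s‖]
  have hpos : (0:ℝ) < Real.exp (-γ * ‖xt - z‖ ^ 2) := Real.exp_pos _
  nlinarith
end

section
/- Let E be a real inner product space, let γ > 0, and define the RBF kernel K(x,y) = exp(-γ‖x-y‖²). Let z_1,…,z_{N_p} ∈ E be the selected benign images, t ∈ E a sample-agnostic trigger, t_1,…,t_{N_p} ∈ E sample-specific triggers, x_t ∈ E a test sample, and x'_t = x_t + t the poisoned test input. Then the total kernel mass of the sample-agnostic poisoned set exceeds that of the sample-specific poisoned set by at least the stated amount: ∑_{j=1}^{N_p} K(x'_t, z_j + t) − ∑_{j=1}^{N_p} K(x'_t, z_j + t_j) ≥ ∑_{j=1}^{N_p} K(x_t, z_j) · (1 − exp(−2γ⟨t − t_j, x_t − z_j⟩)). -/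
/-- **Total kernel mass comparison for poisoned sets.**
Let `E` be a real inner product space, `γ > 0`, and `K x y = exp (-γ‖x-y‖²)` the RBF
kernel. Let `z 1, …, z Np` be the selected benign images, `t` a sample-agnostic
trigger, `tj 1, …, tj Np` sample-specific triggers, `xt` a test sample, and
`x't = xt + t` the poisoned test input. Then
`∑ j, K x't (z j + t) - ∑ j, K x't (z j + tj j)
  ≥ ∑ j, K xt (z j) * (1 - exp (-2γ⟨t - tj j, xt - z j⟩))`. -/
theorem rbf_kernel_poisoned_sum_bound
    {E : Type*} [NormedAddCommGroup E] [InnerProductSpace ℝ E]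
    (γ : ℝ) (hγ : 0 < γ)
    (K : E → E → ℝ) (hK : ∀ x y : E, K x y = Real.exp (-γ * ‖x - y‖ ^ 2))
    (Np : ℕ) (z : Fin Np → E) (t : E) (tj : Fin Np → E) (xt : E)
    (x't : E) (hx't : x't = xt + t) :
    ∑ j : Fin Np, K x't (z j + t) - ∑ j : Fin Np, K x't (z j + tj j) ≥
      ∑ j : Fin Np,
        K xt (z j) * (1 - Real.exp (-2 * γ * (inner ℝ (t - tj j) (xt - z j) : ℝ))) := by
  rw [ge_iff_le, sub_eq_add_neg, ← Finset.sum_neg_distrib, ← Finset.sum_add_distrib]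
  apply Finset.sum_le_sum
  intro j _
  have h1 : K x't (z j + t) = K xt (z j) := by
    rw [hK, hK, hx't]
    congr 2
    abel_nf
  have h2 : K x't (z j + tj j) ≤
      K xt (z j) * Real.exp (-2 * γ * (inner ℝ (t - tj j) (xt - z j) : ℝ)) := by
    rw [hK, hK, ← Real.exp_add]
    apply Real.exp_le_exp.mpr
    have heq : x't - (z j + tj j) = (xt - z j) + (t - tj j) := by
      rw [hx't]; abel
    rw [heq]
    set a := xt - z j
    set b := t - tj j
    have hexp : ‖a + b‖ ^ 2 = ‖a‖ ^ 2 + 2 * (inner ℝ b a : ℝ) + ‖b‖ ^ 2 := by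
      rw [← real_inner_self_eq_norm_sq, ← real_inner_self_eq_norm_sq,
        ← real_inner_self_eq_norm_sq, inner_add_add_self, real_inner_comm a b]
      ring
    have hb : (0:ℝ) ≤ ‖b‖ ^ 2 := by positivity
    nlinarith [hγ]
  calc K xt (z j) * (1 - Real.exp (-2 * γ * (inner ℝ (t - tj j) (xt - z j) : ℝ)))
      = K xt (z j) + -(K xt (z j) * Real.exp (-2 * γ * (inner ℝ (t - tj j) (xt - z j) : ℝ))) := by
        ring
    _ ≤ K x't (z j + t) + -K x't (z j + tj j) := by
        rw [h1]
        exact add_le_add le_rfl (neg_le_neg h2)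
end

section
/- (Quantitative version of Theorem 1: lower bound on the confidence gap.) Let E be a real inner product space, γ > 0, and K(x,y) = exp(-γ‖x-y‖²) the RBF kernel. With benign images x_1,…,x_{N_b} ∈ E (N_b ≥ 1), target-class indices T ⊆ {1,…,N_b}, selected images z_1,…,z_{N_p} ∈ E, sample-agnostic trigger t ∈ E, sample-specific triggers t_1,…,t_{N_p} ∈ E, poisoned test input x'_t = x_t + t, and confidence φ(p) = (∑_{i∈T} K(x'_t, x_i) + ∑_j K(x'_t, p_j)) / (∑_{i=1}^{N_b} K(x'_t, x_i) + ∑_j K(x'_t, p_j)), let C = ∑_{i=1}^{N_b} K(x'_t, x_i) − ∑_{i∈T} K(x'_t, x_i), D_a = ∑_{i=1}^{N_b} K(x'_t, x_i) + ∑_{j=1}^{N_p} K(x'_t, z_j + t), and D_s = ∑_{i=1}^{N_b} K(x'_t, x_i) + ∑_{j=1}^{N_p} K(x'_t, z_j + t_j). Then φ(p^(a)) − φ(p^(s)) ≥ C · (∑_{j=1}^{N_p} K(x_t, z_j) · (1 − exp(−2γ⟨t − t_j, x_t − z_j⟩))) / (D_s · D_a), where p^(a)_j = z_j + t and p^(s)_j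 = z_j + t_j. -/
/-- **Quantitative version of Theorem 1: lower bound on the confidence gap.**
With the RBF kernel `K x y = exp (-γ‖x-y‖²)`, benign images `x 1, …, x Nb` (`Nb ≥ 1`),
target-class indices `T`, selected images `z j`, sample-agnostic trigger `t`,
sample-specific triggers `tj j`, poisoned test input `x't = xt + t`, confidence
`φ p = (∑ i ∈ T, K x't (x i) + ∑ j, K x't (p j)) / (∑ i, K x't (x i) + ∑ j, K x't (p j))`,
and setting `C = ∑ i, K x't (x i) - ∑ i ∈ T, K x't (x i)`,
`Da = ∑ i, K x't (x i) + ∑ j, K x't (z j + t)`,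
`Ds = ∑ i, K x't (x i) + ∑ j, K x't (z j + tj j)`, one has
`φ (fun j => z j + t) - φ (fun j => z j + tj j)
  ≥ C * (∑ j, K xt (z j) * (1 - exp (-2γ⟨t - tj j, xt - z j⟩))) / (Ds * Da)`. -/
theorem confidence_gap_lower_bound
    {E : Type*} [NormedAddCommGroup E] [InnerProductSpace ℝ E]
    (γ : ℝ) (hγ : 0 < γ)
    (K : E → E → ℝ) (hK : ∀ x y : E, K x y = Real.exp (-γ * ‖x - y‖ ^ 2))
    (Nb : ℕ) (hNb : 1 ≤ Nb) (x : Fin Nb → E) (T : Finset (Fin Nb))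
    (Np : ℕ) (z : Fin Np → E) (t : E) (tj : Fin Np → E) (xt : E)
    (x't : E) (hx't : x't = xt + t)
    (φ : (Fin Np → E) → ℝ)
    (hφ : ∀ p : Fin Np → E,
      φ p = (∑ i ∈ T, K x't (x i) + ∑ j : Fin Np, K x't (p j)) /
        (∑ i : Fin Nb, K x't (x i) + ∑ j : Fin Np, K x't (p j)))
    (C Da Ds : ℝ)
    (hC : C = ∑ i : Fin Nb, K x't (x i) - ∑ i ∈ T, K x't (x i))
    (hDa : Da = ∑ i : Fin Nb, K x't (x i) + ∑ j : Fin Np, K x't (z j + t))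
    (hDs : Ds = ∑ i : Fin Nb, K x't (x i) + ∑ j : Fin Np, K x't (z j + tj j)) :
    φ (fun j => z j + t) - φ (fun j => z j + tj j) ≥
      C * (∑ j : Fin Np,
          K xt (z j) * (1 - Real.exp (-2 * γ * (inner ℝ (t - tj j) (xt - z j) : ℝ)))) /
        (Ds * Da) := by
  have hKpos : ∀ u v : E, 0 < K u v := fun u v => by rw [hK]; exact Real.exp_pos _
  set A := ∑ i ∈ T, K x't (x i) with hA
  set B := ∑ i : Fin Nb, K x't (x i) with hB
  set Sa := ∑ j : Fin Np, K x't (z j + t) with hSa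
  set Ss := ∑ j : Fin Np, K x't (z j + tj j) with hSs
  have hBpos : 0 < B := by
    have : Nonempty (Fin Nb) := ⟨⟨0, hNb⟩⟩
    exact Finset.sum_pos (fun i _ => hKpos _ _) Finset.univ_nonempty
  have hSann : 0 ≤ Sa := Finset.sum_nonneg fun j _ => (hKpos _ _).le
  have hSsnn : 0 ≤ Ss := Finset.sum_nonneg fun j _ => (hKpos _ _).le
  have hDapos : 0 < Da := by rw [hDa]; linarith
  have hDspos : 0 < Ds := by rw [hDs]; linarith
  have hCnn : 0 ≤ C := by
    rw [hC]
    have : A ≤ B := Finset.sum_le_sum_of_subset_of_nonneg (Finset.subset_univ T)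
      (fun i _ _ => (hKpos _ _).le)
    linarith
  -- exact expression for the gap
  have hgap : φ (fun j => z j + t) - φ (fun j => z j + tj j) =
      C * (Sa - Ss) / (Ds * Da) := by
    rw [hφ, hφ, hC]
    have h1 : B + Sa = Da := hDa.symm
    have h2 : B + Ss = Ds := hDs.symm
    have hDane : (B + Sa) ≠ 0 := by rw [h1]; exact hDapos.ne'
    have hDsne : (B + Ss) ≠ 0 := by rw [h2]; exact hDspos.ne'
    rw [← h1, ← h2]
    change (A + Sa) / (B + Sa) - (A + Ss) / (B + Ss) = (B - A) * (Sa - Ss) / ((B + Ss) * (B + Sa))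
    field_simp
    ring
  rw [hgap]
  -- termwise bound: Sa - Ss ≥ ∑ ...
  have hterm : ∀ j : Fin Np,
      K xt (z j) * (1 - Real.exp (-2 * γ * (inner ℝ (t - tj j) (xt - z j) : ℝ))) ≤
        K x't (z j + t) - K x't (z j + tj j) := by
    intro j
    have ha : K x't (z j + t) = K xt (z j) := by
      rw [hK, hK, hx't, show xt + t - (z j + t) = xt - z j by abel]
    have hb : K x't (z j + tj j) ≤
        K xt (z j) * Real.exp (-2 * γ * (inner ℝ (t - tj j) (xt - z j) : ℝ)) := by
      rw [hK, hK, hx't, show xt + t - (z j + tj j) = (xt - z j) + (t - tj j) by abel,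
        ← Real.exp_add]
      apply Real.exp_le_exp.2
      rw [norm_add_sq_real]
      have hcomm : (inner ℝ (t - tj j) (xt - z j) : ℝ) = inner ℝ (xt - z j) (t - tj j) :=
        real_inner_comm _ _
      rw [hcomm]
      nlinarith [sq_nonneg ‖t - tj j‖, hγ.le]
    calc K xt (z j) * (1 - Real.exp (-2 * γ * (inner ℝ (t - tj j) (xt - z j) : ℝ)))
        = K xt (z j) - K xt (z j) * Real.exp (-2 * γ * (inner ℝ (t - tj j) (xt - z j) : ℝ)) := by
          ring
      _ ≤ K x't (z j + t) - K x't (z j + tj j) := by rw [ha]; linarith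
  have hsum : (∑ j : Fin Np,
      K xt (z j) * (1 - Real.exp (-2 * γ * (inner ℝ (t - tj j) (xt - z j) : ℝ)))) ≤ Sa - Ss := by
    rw [hSa, hSs, ← Finset.sum_sub_distrib]
    exact Finset.sum_le_sum fun j _ => hterm j
  exact ((div_le_div_iff_of_pos_right (mul_pos hDspos hDapos)).2
    (mul_le_mul_of_nonneg_left hsum hCnn)).ge
end
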